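/- arXiv:2111.08672 — 3 statements merged into one kernel-verified Lean document; each statement's English description precedes it below -/
import Mathlib

section
/- (Theorem 2.3, explicit form) Fix β ∈ (0,1) and θ ∈ (0,1). Suppose the counting process N(t) satisfies P{N(t) ≤ θ t^β / Γ(1+β)} ≤ C_β / t^β for all t > 0, for some constant C_β > 0, and suppose the embedded chain converges geometrically: there are constants c₁ > 0 and ℓ* > 0 such that ‖q^{(n)}_{i,·} − π‖ ≤ c₁ e^{−n/(e ℓ*)} for every state i and every n ≥ 0. Then for every ε > 0, T^cont_ε ≤ ( max{ C_β, (e Γ(1+β)/θ) ℓ* } · 2 c₁ |𝒮| / ε )^{1/β}. -/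
open MeasureTheory ProbabilityTheory Filter Finset

/-- Total variation distance between two (probability) vectors on a finite set. -/
noncomputable def tvDist {𝒮 : Type*} [Fintype 𝒮] (f g : 𝒮 → ℝ) : ℝ :=
  (1 / 2) * ∑ x, |f x - g x|

/-!
`p i · t` is the mixture of the rows `(Q ^ n) i ·` weighted by the law of `N t`, so by convexity
its total variation distance to `π` is at most `E[c₁ exp(-N t / (e ℓ))]`. Split according to
whether `N t ≤ m := θ t^β / Γ(1+β)`: that event has probability at most `C_β / t^β`, and off it
the integrand is at most `c₁ exp(-m / (e ℓ)) ≤ c₁ e ℓ / m = c₁ (e Γ(1+β) ℓ / θ) / t^β`. Summing over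
the states and choosing `t^β = max{…} · 2 c₁ |𝒮| / ε` gives total distance at most `ε`.
-/

theorem Real.exp_neg_le_inv {y : ℝ} (hy : 0 < y) : Real.exp (-y) ≤ y⁻¹ := by
  rw [Real.exp_neg]
  exact inv_anti₀ hy (by linarith [Real.add_one_le_exp y])

theorem Real.sInf_le_of_mem_of_nonneg {s : Set ℝ} {x : ℝ} (hx : x ∈ s) (h0 : 0 ≤ x) :
    sInf s ≤ x := by
  by_cases hb : BddBelow s
  · exact csInf_le hb hx
  · rwa [Real.sInf_of_not_bddBelow hb]

section TotalVariation

variable {𝒮 : Type*} [Fintype 𝒮]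

theorem tvDist_nonneg (f g : 𝒮 → ℝ) : 0 ≤ tvDist f g := by
  unfold tvDist
  positivity

theorem abs_sub_le_two_mul_tvDist (f g : 𝒮 → ℝ) (j : 𝒮) : |f j - g j| ≤ 2 * tvDist f g := by
  have := single_le_sum (fun x _ => abs_nonneg (f x - g x)) (mem_univ j)
  unfold tvDist
  linarith

theorem tvDist_tsum_mul_le {ι : Type*} {w : ι → ℝ} (hw0 : ∀ n, 0 ≤ w n) (hw : HasSum w 1)
    (v : ι → 𝒮 → ℝ) (π : 𝒮 → ℝ) {c : ℝ} (hv : ∀ n, tvDist (v n) π ≤ c) :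
    tvDist (fun j => ∑' n, v n j * w n) π ≤ ∑' n, tvDist (v n) π * w n := by
  have habs : ∀ j, Summable fun n => |v n j - π j| * w n := fun j =>
    (hw.summable.mul_left (2 * c)).of_nonneg_of_le (fun n => mul_nonneg (abs_nonneg _) (hw0 n))
      fun n => mul_le_mul_of_nonneg_right ((abs_sub_le_two_mul_tvDist _ _ j).trans (by
        linarith [hv n])) (hw0 n)
  have hdiff : ∀ j, ∑' n, v n j * w n - π j = ∑' n, (v n j - π j) * w n := fun j => by
    have hsj : Summable fun n => (v n j - π j) * w n :=
      .of_abs (by simpa only [abs_mul, abs_of_nonneg (hw0 _)] using habs j)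
    have h := hsj.hasSum.add (hw.mul_left (π j))
    rw [mul_one] at h
    rw [show (fun n => v n j * w n) = fun n => (v n j - π j) * w n + π j * w n from
      funext fun n => by ring, h.tsum_eq, add_sub_cancel_right]
  have hpoint : ∀ j, |∑' n, v n j * w n - π j| ≤ ∑' n, |v n j - π j| * w n := fun j => by
    rw [hdiff]
    simpa only [Real.norm_eq_abs, abs_mul, abs_of_nonneg (hw0 _)] using
      norm_tsum_le_tsum_norm (f := fun n => (v n j - π j) * w n)
        (by simpa only [Real.norm_eq_abs, abs_mul, abs_of_nonneg (hw0 _)] using habs j)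
  have htv : HasSum (fun n => tvDist (v n) π * w n)
      ((1 / 2) * ∑ j, ∑' n, |v n j - π j| * w n) := by
    simp only [tvDist, mul_assoc, sum_mul]
    exact (hasSum_sum fun j _ => (habs j).hasSum).mul_left _
  rw [htv.tsum_eq]
  unfold tvDist
  gcongr with j
  exact hpoint j

end TotalVariation

theorem tsum_mul_le_of_le_of_forall_notMem_le {ι : Type*} {w : ι → ℝ} (hw0 : ∀ n, 0 ≤ w n)
    (hw : HasSum w 1) {f : ι → ℝ} {a b : ℝ} (K : Finset ι) (hf0 : ∀ n, 0 ≤ f n)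
    (hfa : ∀ n, f n ≤ a) (hfb : ∀ n ∉ K, f n ≤ b) (hb : 0 ≤ b) :
    ∑' n, f n * w n ≤ a * ∑ n ∈ K, w n + b := by
  have hK : HasSum (fun n => a * (K : Set ι).indicator w n + b * w n)
      (a * ∑ n ∈ K, w n + b) := by
    simpa using ((hasSum_subtype_iff_indicator.mp (K.hasSum w)).mul_left a).add (hw.mul_left b)
  refine hasSum_le (fun n => ?_) (Summable.hasSum ?_) hK
  · by_cases hn : n ∈ K
    · simp only [Set.indicator_of_mem (mem_coe.2 hn)]
      nlinarith [hfa n, hw0 n]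
    · simp only [Set.indicator_of_notMem (mem_coe.not.2 hn), mul_zero, zero_add]
      exact mul_le_mul_of_nonneg_right (hfb n hn) (hw0 n)
  · exact hw.summable.mul_left a |>.of_nonneg_of_le (fun n => mul_nonneg (hf0 n) (hw0 n))
      fun n => mul_le_mul_of_nonneg_right (hfa n) (hw0 n)

section Fibers

variable {𝒮 Ω : Type*} [Fintype 𝒮] [MeasurableSpace Ω] (μ : Measure Ω) {X : Ω → ℕ}

theorem measurable_sSup_setOf {p : ℕ → Ω → Prop}
    (hp : ∀ n, Measurable (p n)) : Measurable fun ω => sSup {n | p n ω} := by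
  refine measurable_of_Iic fun k => ?_
  have hiff : ∀ ω, sSup {n | p n ω} ≤ k ↔ ¬BddAbove {n | p n ω} ∨ ∀ n, p n ω → n ≤ k := by
    intro ω
    by_cases hb : BddAbove {n | p n ω}
    · rw [csSup_le_iff' hb]; simp [hb]
    · simp [hb]
  simp only [Set.preimage, Set.mem_Iic, hiff, bddAbove_def, Set.mem_ofPred_eq]
  refine Measurable.setOf ?_
  fun_prop

theorem hasSum_measure_fiber_toReal [IsProbabilityMeasure μ] (hX : Measurable X) :
    HasSum (fun n => (μ {ω | X ω = n}).toReal) 1 := by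
  have h : ∑' n, μ (X ⁻¹' {n}) = 1 := by
    rw [← measure_iUnion (pairwise_disjoint_fiber X) fun n => hX (measurableSet_singleton n)]
    rw [← Set.preimage_iUnion, Set.iUnion_of_singleton, Set.preimage_univ, measure_univ]
  have := ENNReal.hasSum_toReal (h ▸ ENNReal.one_ne_top)
  rwa [← ENNReal.tsum_toReal_eq fun n => measure_ne_top _ _, h, ENNReal.toReal_one] at this

theorem sum_measure_fiber_toReal_le [IsFiniteMeasure μ] (hX : Measurable X) {m : ℝ}
    (hm : 0 ≤ m) :
    ∑ n ∈ Iic ⌊m⌋₊, (μ {ω | X ω = n}).toReal ≤ (μ {ω | (X ω : ℝ) ≤ m}).toReal := by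
  rw [← ENNReal.toReal_sum fun n _ => measure_ne_top μ _]
  refine ENNReal.toReal_mono (measure_ne_top μ _) ?_
  calc ∑ n ∈ Iic ⌊m⌋₊, μ {ω | X ω = n} = μ (X ⁻¹' ↑(Iic ⌊m⌋₊)) :=
        sum_measure_preimage_singleton _ fun n _ => hX (measurableSet_singleton n)
    _ ≤ _ := measure_mono fun ω hω => by simpa [Nat.le_floor_iff hm] using hω

theorem tvDist_tsum_mul_measure_le [IsProbabilityMeasure μ] (hX : Measurable X)
    (v : ℕ → 𝒮 → ℝ) (π : 𝒮 → ℝ) {c L m : ℝ} (hc : 0 ≤ c) (hL : 0 < L) (hm : 0 < m)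
    (hv : ∀ n : ℕ, tvDist (v n) π ≤ c * Real.exp (-n / L)) :
    tvDist (fun j => ∑' n, v n j * (μ {ω | X ω = n}).toReal) π ≤
      c * (μ {ω | (X ω : ℝ) ≤ m}).toReal + c * (L / m) := by
  have hw := hasSum_measure_fiber_toReal μ hX
  have hw0 : ∀ n, 0 ≤ (μ {ω | X ω = n}).toReal := fun n => ENNReal.toReal_nonneg
  have hv_le : ∀ {n : ℕ} {x : ℝ}, x ≤ n → tvDist (v n) π ≤ c * Real.exp (-x / L) := fun hx =>
    (hv _).trans (by gcongr)
  have hvc : ∀ n, tvDist (v n) π ≤ c := fun n => by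
    simpa using hv_le (Nat.cast_nonneg n)
  have hv_tail : ∀ n ∉ Iic ⌊m⌋₊, tvDist (v n) π ≤ c * Real.exp (-m / L) := fun n hn =>
    hv_le (le_of_lt (by simpa [Nat.le_floor_iff hm.le] using hn))
  have hexp : Real.exp (-m / L) ≤ L / m := by
    simpa [neg_div] using Real.exp_neg_le_inv (div_pos hm hL)
  calc _ ≤ ∑' n, tvDist (v n) π * (μ {ω | X ω = n}).toReal := tvDist_tsum_mul_le hw0 hw v π hvc
    _ ≤ c * ∑ n ∈ Iic ⌊m⌋₊, (μ {ω | X ω = n}).toReal + c * Real.exp (-m / L) :=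
      tsum_mul_le_of_le_of_forall_notMem_le hw0 hw _ (fun n => tvDist_nonneg _ _) hvc hv_tail
        (by positivity)
    _ ≤ _ := by gcongr; exact sum_measure_fiber_toReal_le μ hX hm.le

theorem tvDist_tsum_mul_measure_le_of_tail [IsProbabilityMeasure μ] (hX : Measurable X)
    (v : ℕ → 𝒮 → ℝ) (π : 𝒮 → ℝ) {c ℓ θ Γ C R M : ℝ} (hc : 0 ≤ c) (hℓ : 0 < ℓ) (hθ : 0 < θ)
    (hΓ : 0 < Γ) (hR : 0 < R) (hCM : C ≤ M) (hM : Real.exp 1 * Γ / θ * ℓ ≤ M)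
    (htail : (μ {ω | (X ω : ℝ) ≤ θ * R / Γ}).toReal ≤ C / R)
    (hv : ∀ n : ℕ, tvDist (v n) π ≤ c * Real.exp (-n / (Real.exp 1 * ℓ))) :
    tvDist (fun j => ∑' n, v n j * (μ {ω | X ω = n}).toReal) π ≤ 2 * c * M / R := by
  have hm : 0 < θ * R / Γ := by positivity
  calc _ ≤ c * (C / R) + c * (Real.exp 1 * ℓ / (θ * R / Γ)) :=
        (tvDist_tsum_mul_measure_le μ hX v π hc (by positivity) hm hv).trans (by gcongr)
    _ = c * (C / R) + c * (Real.exp 1 * Γ / θ * ℓ / R) := by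
        congr 2
        field_simp
    _ ≤ c * (M / R) + c * (M / R) := by gcongr
    _ = 2 * c * M / R := by ring

end Fibers

theorem mixing_time_upper_bound_MittagLeffler_general
    {𝒮 : Type*} [Fintype 𝒮] [DecidableEq 𝒮] [Nonempty 𝒮]
    (Q : Matrix 𝒮 𝒮 ℝ)
    (π : 𝒮 → ℝ)
    {Ω : Type*} [MeasurableSpace Ω] (μ : Measure Ω) [IsProbabilityMeasure μ]
    (T : ℕ → Ω → ℝ)
    (hTmeas : ∀ n, Measurable (T n))
    (Spart : ℕ → Ω → ℝ)
    (hSpart : ∀ n ω, Spart n ω = ∑ k ∈ Finset.range n, T k ω)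
    (N : ℝ → Ω → ℕ)
    (hN : ∀ t ω, N t ω = sSup {n : ℕ | Spart n ω ≤ t})
    (p : 𝒮 → 𝒮 → ℝ → ℝ)
    (hp : ∀ i j t, p i j t = ∑' n : ℕ, (Q ^ n) i j * (μ {ω | N t ω = n}).toReal)
    (β θ Cβ c₁ ℓ : ℝ)
    (hβ : β ∈ Set.Ioo (0 : ℝ) 1) (hθ : θ ∈ Set.Ioo (0 : ℝ) 1)
    (hCβ : 0 < Cβ) (hc₁ : 0 < c₁) (hℓ : 0 < ℓ)
    -- tail bound for the counting process
    (hNtail : ∀ t : ℝ, 0 < t →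
      (μ {ω | (N t ω : ℝ) ≤ θ * t ^ β / Real.Gamma (1 + β)}).toReal ≤ Cβ / t ^ β)
    -- geometric convergence of the embedded chain
    (hgeo : ∀ i (n : ℕ),
      tvDist (fun j => (Q ^ n) i j) π ≤ c₁ * Real.exp (-(n : ℝ) / (Real.exp 1 * ℓ)))
    -- the continuous mixing time
    (Tcont : ℝ → ℝ)
    (hTcont : ∀ ε, Tcont ε = sInf {t : ℝ | ∑ i, tvDist (fun j => p i j t) π ≤ ε}) :
    ∀ ε : ℝ, 0 < ε →
      Tcont ε ≤ (max Cβ (Real.exp 1 * Real.Gamma (1 + β) / θ * ℓ)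
          * (2 * c₁ * (Fintype.card 𝒮 : ℝ)) / ε) ^ (1 / β) := by
  intro ε hε
  set M := max Cβ (Real.exp 1 * Real.Gamma (1 + β) / θ * ℓ)
  set R := M * (2 * c₁ * (Fintype.card 𝒮 : ℝ)) / ε
  have hM : 0 < M := hCβ.trans_le (le_max_left _ _)
  have hR : 0 < R := by
    have : (0 : ℝ) < Fintype.card 𝒮 := by exact_mod_cast Fintype.card_pos
    positivity
  set t := R ^ (1 / β) with ht_def
  have ht : 0 < t := by positivity
  have htβ : t ^ β = R := by rw [ht_def, one_div, Real.rpow_inv_rpow hR.le hβ.1.ne']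
  have hNt : Measurable (N t) := by
    simp only [funext (hN t), hSpart]
    exact measurable_sSup_setOf fun n =>
      measurableSet_setOfPred.1 (measurableSet_le (by fun_prop) measurable_const)
  have hstate : ∀ i, tvDist (fun j => p i j t) π ≤ 2 * c₁ * M / R := fun i => by
    simp only [hp]
    exact tvDist_tsum_mul_measure_le_of_tail μ hNt (fun n j => (Q ^ n) i j) π hc₁.le hℓ hθ.1
      (Real.Gamma_pos_of_pos (by linarith [hβ.1])) hR (le_max_left _ _) (le_max_right _ _)
      (htβ ▸ hNtail t ht) (hgeo i)
  rw [hTcont]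
  refine Real.sInf_le_of_mem_of_nonneg ?_ ht.le
  calc ∑ i, tvDist (fun j => p i j t) π ≤ ∑ _i : 𝒮, 2 * c₁ * M / R :=
        sum_le_sum fun i _ => hstate i
    _ = ε := by
      rw [sum_const, card_univ, nsmul_eq_mul]
      simp only [R]
      field_simp

/-- Theorem 2.3, explicit form: if the counting process satisfies
`P{N(t) ≤ θ t^β / Γ(1+β)} ≤ C_β / t^β` and the embedded chain converges geometrically,
`‖q^{(n)}_{i,·} − π‖ ≤ c₁ e^{−n/(e ℓ*)}`, then
`T^cont_ε ≤ (max{C_β, (e Γ(1+β)/θ) ℓ*} · 2 c₁ |𝒮| / ε)^{1/β}`. -/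
theorem mixing_time_upper_bound_MittagLeffler
    {𝒮 : Type*} [Fintype 𝒮] [DecidableEq 𝒮] [Nonempty 𝒮]
    (Q : Matrix 𝒮 𝒮 ℝ)
    (hQnonneg : ∀ i j, 0 ≤ Q i j)
    (hQrow : ∀ i, ∑ j, Q i j = 1)
    (π : 𝒮 → ℝ)
    (hconv : ∀ i j, Tendsto (fun n : ℕ => (Q ^ n) i j) atTop (nhds (π j)))
    {Ω : Type*} [MeasurableSpace Ω] (μ : Measure Ω) [IsProbabilityMeasure μ]
    (T : ℕ → Ω → ℝ)
    (hTmeas : ∀ n, Measurable (T n))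
    (hTpos : ∀ n, ∀ᵐ ω ∂μ, 0 < T n ω)
    (hTindep : iIndepFun T μ)
    (hTident : ∀ n, IdentDistrib (T n) (T 0) μ μ)
    (Spart : ℕ → Ω → ℝ)
    (hSpart : ∀ n ω, Spart n ω = ∑ k ∈ Finset.range n, T k ω)
    (N : ℝ → Ω → ℕ)
    (hN : ∀ t ω, N t ω = sSup {n : ℕ | Spart n ω ≤ t})
    (p : 𝒮 → 𝒮 → ℝ → ℝ)
    (hp : ∀ i j t, p i j t = ∑' n : ℕ, (Q ^ n) i j * (μ {ω | N t ω = n}).toReal)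
    (β θ Cβ c₁ ℓ : ℝ)
    (hβ : β ∈ Set.Ioo (0 : ℝ) 1) (hθ : θ ∈ Set.Ioo (0 : ℝ) 1)
    (hCβ : 0 < Cβ) (hc₁ : 0 < c₁) (hℓ : 0 < ℓ)
    -- tail bound for the counting process
    (hNtail : ∀ t : ℝ, 0 < t →
      (μ {ω | (N t ω : ℝ) ≤ θ * t ^ β / Real.Gamma (1 + β)}).toReal ≤ Cβ / t ^ β)
    -- geometric convergence of the embedded chain
    (hgeo : ∀ i (n : ℕ),
      tvDist (fun j => (Q ^ n) i j) π ≤ c₁ * Real.exp (-(n : ℝ) / (Real.exp 1 * ℓ)))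
    -- the continuous mixing time
    (Tcont : ℝ → ℝ)
    (hTcont : ∀ ε, Tcont ε = sInf {t : ℝ | ∑ i, tvDist (fun j => p i j t) π ≤ ε}) :
    ∀ ε : ℝ, 0 < ε →
      Tcont ε ≤ (max Cβ (Real.exp 1 * Real.Gamma (1 + β) / θ * ℓ)
          * (2 * c₁ * (Fintype.card 𝒮 : ℝ)) / ε) ^ (1 / β) :=
  mixing_time_upper_bound_MittagLeffler_general Q π μ T hTmeas Spart hSpart N hN p hp β θ Cβ c₁ ℓ hβ
    hθ hCβ hc₁ hℓ hNtail hgeo Tcont hTcont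
end

section
/- (Lemma 3.1) Assume the tail assumption holds with some β > 0. Then there exists a uniform positive constant C₀, depending only on β, c₁ and c₂, such that for every integer K ≥ 1 and every t > (max{t₀, (2c₂)^{1/β}}) · K: c₁ K / t^β − C₀ K² / t^{2β} ≤ P{N(t) < K} ≤ c₂ K^{1+β} / t^β + C₀ K^{1+2β} / t^{2β}. -/
/-!
Let `p = P{T₁ > t}`. On the one hand `N(t) < K` as soon as one of `T₁, …, T_K` exceeds `t`, so
`P{N(t) < K} ≥ 1 - (1 - p)^K ≥ K p - (K p)² / 2` by the second Bonferroni inequality. On the other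
hand `N(t) < K` forces `S_K > t`, hence some `T_i > t / K` with `i ≤ K`, so the union bound gives
`P{N(t) < K} ≤ K P{T₁ > t / K}`. Both `t` and `t / K` exceed `t₀`, and the tail assumption turns
these two estimates into the stated ones with `C₀ = c₂² / 2`.
-/

open MeasureTheory ProbabilityTheory Filter Finset

lemma one_sub_pow_le_one_sub_mul_add_sq {p : ℝ} (hp0 : 0 ≤ p) (hp1 : p ≤ 1) (n : ℕ) :
    (1 - p) ^ n ≤ 1 - n * p + (n * p) ^ 2 / 2 := by
  induction n with
  | zero => simp
  | succ n ih =>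
    have hcube : 0 ≤ (n : ℝ) ^ 2 * p ^ 3 := by positivity
    rw [pow_succ]
    refine (mul_le_mul_of_nonneg_right ih (sub_nonneg.2 hp1)).trans ?_
    push_cast
    nlinarith [sq_nonneg p]

lemma mul_div_sub_le_one_sub_one_sub_pow {p c₁ c₂ x : ℝ} (hp0 : 0 ≤ p) (hp1 : p ≤ 1)
    (hlb : c₁ / x ≤ p) (hub : p ≤ c₂ / x) (n : ℕ) :
    c₁ * n / x - c₂ ^ 2 / 2 * n ^ 2 / x ^ 2 ≤ 1 - (1 - p) ^ n := by
  have hlin : c₁ * n / x ≤ n * p := by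
    rw [mul_comm c₁, mul_div_assoc]
    exact mul_le_mul_of_nonneg_left hlb n.cast_nonneg
  have hsq : (n * p) ^ 2 / 2 ≤ c₂ ^ 2 / 2 * n ^ 2 / x ^ 2 :=
    calc (n * p) ^ 2 / 2 ≤ (n * (c₂ / x)) ^ 2 / 2 := by gcongr
      _ = c₂ ^ 2 / 2 * n ^ 2 / x ^ 2 := by ring
  linarith [one_sub_pow_le_one_sub_mul_add_sq hp0 hp1 n]

lemma Monotone.sSup_setOf_le_lt_iff {α : Type*} [LinearOrder α] {S : ℕ → α} (hS : Monotone S)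
    {t : α} (h0 : S 0 ≤ t) (hunbdd : ∃ n, t < S n) (K : ℕ) :
    sSup {n | S n ≤ t} < K ↔ t < S K := by
  obtain ⟨m, hm⟩ := hunbdd
  have hbdd : BddAbove {n | S n ≤ t} :=
    ⟨m, fun n hn => le_of_not_gt fun hmn => (hm.trans_le (hS hmn.le)).not_ge hn⟩
  constructor
  · exact fun hK => lt_of_not_ge fun hSK => (le_csSup hbdd hSK).not_gt hK
  · exact fun hSK => lt_of_not_ge fun hK =>
      (hSK.trans_le (hS hK)).not_ge (Nat.sSup_mem ⟨0, h0⟩ hbdd)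

section CountingProcess

variable {Ω : Type*}

/-- `N(t)`. If all partial sums stay below `t`, the set is unbounded and `sSup` is the junk
value `0`; for i.i.d. interarrival times this happens only on a null set. -/
noncomputable def countingProcess (T : ℕ → Ω → ℝ) (t : ℝ) (ω : Ω) : ℕ :=
  sSup {n | ∑ k ∈ range n, T k ω ≤ t}

lemma countingProcess_lt_iff {T : ℕ → Ω → ℝ} {ω : Ω} (hT : ∀ n, 0 ≤ T n ω) {t : ℝ}
    (ht : 0 ≤ t) (hunbdd : ∃ n, t < T n ω) (K : ℕ) :
    countingProcess T t ω < K ↔ t < ∑ k ∈ range K, T k ω := by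
  obtain ⟨n, hn⟩ := hunbdd
  refine Monotone.sSup_setOf_le_lt_iff ?_ (by simpa using ht) ⟨n + 1, ?_⟩ K
  · exact monotone_nat_of_le_succ fun k => by simp [sum_range_succ, hT k]
  · exact hn.trans_le (single_le_sum (fun k _ => hT k) (self_mem_range_succ n))

variable [MeasurableSpace Ω] {μ : Measure Ω} {T : ℕ → Ω → ℝ}

lemma measure_forall_lt_le_eq_pow (hindep : iIndepFun T μ)
    (hident : ∀ n, IdentDistrib (T n) (T 0) μ μ) (s : ℝ) (M : ℕ) :
    μ {ω | ∀ i < M, T i ω ≤ s} = μ {ω | T 0 ω ≤ s} ^ M := by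
  calc μ {ω | ∀ i < M, T i ω ≤ s} = μ (⋂ i ∈ range M, T i ⁻¹' Set.Iic s) := by
        congr 1
        ext ω
        simp
    _ = ∏ i ∈ range M, μ (T i ⁻¹' Set.Iic s) :=
        hindep.measure_inter_preimage_eq_mul _ fun _ _ => measurableSet_Iic
    _ = μ {ω | T 0 ω ≤ s} ^ M := by
        rw [prod_congr rfl fun i _ => (hident i).measure_mem_eq measurableSet_Iic, prod_const,
          card_range]
        rfl

lemma measure_le_eq_one_sub [IsProbabilityMeasure μ] {X : Ω → ℝ} (hX : Measurable X) (s : ℝ) :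
    μ {ω | X ω ≤ s} = 1 - μ {ω | s < X ω} := by
  have h := prob_compl_eq_one_sub (μ := μ) (hX (measurableSet_Ioi (a := s)))
  rwa [← Set.preimage_compl, Set.compl_Ioi] at h

lemma measure_exists_lt_toReal_eq_one_sub_pow [IsProbabilityMeasure μ]
    (hmeas : ∀ n, Measurable (T n)) (hindep : iIndepFun T μ)
    (hident : ∀ n, IdentDistrib (T n) (T 0) μ μ) (s : ℝ) (K : ℕ) :
    (μ {ω | ∃ i < K, s < T i ω}).toReal = 1 - (1 - (μ {ω | s < T 0 ω}).toReal) ^ K := by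
  have hcompl : {ω | ∃ i < K, s < T i ω} = {ω | ∀ i < K, T i ω ≤ s}ᶜ := by
    ext ω
    simp
  have hmeasK : MeasurableSet {ω | ∀ i < K, T i ω ≤ s} := by
    simp only [Set.ofPred_forall]
    exact .iInter fun i => .iInter fun _ => hmeas i measurableSet_Iic
  rw [hcompl, prob_compl_eq_one_sub hmeasK, measure_forall_lt_le_eq_pow hindep hident,
    measure_le_eq_one_sub (hmeas 0), ENNReal.toReal_sub_of_le (pow_le_one₀ zero_le tsub_le_self)
    ENNReal.one_ne_top, ENNReal.toReal_pow, ENNReal.toReal_sub_of_le prob_le_one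
    ENNReal.one_ne_top, ENNReal.toReal_one]

lemma measure_forall_le_eq_zero [IsProbabilityMeasure μ] (hmeas : ∀ n, Measurable (T n))
    (hindep : iIndepFun T μ) (hident : ∀ n, IdentDistrib (T n) (T 0) μ μ) {s : ℝ}
    (hs : μ {ω | s < T 0 ω} ≠ 0) :
    μ {ω | ∀ i, T i ω ≤ s} = 0 := by
  have hlt : μ {ω | T 0 ω ≤ s} < 1 := by
    rw [measure_le_eq_one_sub (hmeas 0)]
    exact ENNReal.sub_lt_self ENNReal.one_ne_top one_ne_zero hs
  refine le_antisymm (ge_of_tendsto' (ENNReal.tendsto_pow_atTop_nhds_zero_of_lt_one hlt)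
    fun M => ?_) zero_le
  rw [← measure_forall_lt_le_eq_pow hindep hident]
  exact measure_mono fun ω hω i _ => hω i

lemma measure_exists_lt_le_mul (hident : ∀ n, IdentDistrib (T n) (T 0) μ μ) (s : ℝ) (K : ℕ) :
    μ {ω | ∃ i < K, s < T i ω} ≤ K * μ {ω | s < T 0 ω} := by
  have hunion : {ω | ∃ i < K, s < T i ω} = ⋃ i ∈ range K, T i ⁻¹' Set.Ioi s := by
    ext ω
    simp
  rw [hunion]
  calc μ (⋃ i ∈ range K, T i ⁻¹' Set.Ioi s)
      ≤ ∑ i ∈ range K, μ (T i ⁻¹' Set.Ioi s) := measure_biUnion_finset_le _ _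
    _ = K * μ {ω | s < T 0 ω} := by
      rw [sum_congr rfl fun i _ => (hident i).measure_mem_eq measurableSet_Ioi]
      simp [Set.preimage, nsmul_eq_mul]

lemma ae_countingProcess_lt_iff [IsProbabilityMeasure μ] (hmeas : ∀ n, Measurable (T n))
    (hnonneg : ∀ n, ∀ᵐ ω ∂μ, 0 ≤ T n ω) (hindep : iIndepFun T μ)
    (hident : ∀ n, IdentDistrib (T n) (T 0) μ μ) {t : ℝ} (ht : 0 ≤ t)
    (htail : μ {ω | t < T 0 ω} ≠ 0) (K : ℕ) :
    ∀ᵐ ω ∂μ, countingProcess T t ω < K ↔ t < ∑ k ∈ range K, T k ω := by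
  have hunbdd : ∀ᵐ ω ∂μ, ∃ n, t < T n ω := by
    rw [ae_iff]
    simpa using measure_forall_le_eq_zero hmeas hindep hident htail
  filter_upwards [ae_all_iff.2 hnonneg, hunbdd] with ω hω hωunbdd
  exact countingProcess_lt_iff hω ht hωunbdd K

lemma one_sub_one_sub_pow_le_measure_countingProcess_lt [IsProbabilityMeasure μ]
    (hmeas : ∀ n, Measurable (T n)) (hnonneg : ∀ n, ∀ᵐ ω ∂μ, 0 ≤ T n ω)
    (hindep : iIndepFun T μ) (hident : ∀ n, IdentDistrib (T n) (T 0) μ μ) {t : ℝ} (ht : 0 ≤ t)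
    (htail : μ {ω | t < T 0 ω} ≠ 0) (K : ℕ) :
    1 - (1 - (μ {ω | t < T 0 ω}).toReal) ^ K ≤ (μ {ω | countingProcess T t ω < K}).toReal := by
  rw [← measure_exists_lt_toReal_eq_one_sub_pow hmeas hindep hident]
  refine ENNReal.toReal_mono (measure_ne_top _ _) (measure_mono_ae ?_)
  filter_upwards [ae_countingProcess_lt_iff hmeas hnonneg hindep hident ht htail K,
    ae_all_iff.2 hnonneg] with ω hiff hω ⟨i, hi, hti⟩
  exact hiff.2 (hti.trans_le (single_le_sum (fun k _ => hω k) (mem_range.2 hi)))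

lemma measure_countingProcess_lt_le_mul [IsProbabilityMeasure μ] (hmeas : ∀ n, Measurable (T n))
    (hnonneg : ∀ n, ∀ᵐ ω ∂μ, 0 ≤ T n ω) (hindep : iIndepFun T μ)
    (hident : ∀ n, IdentDistrib (T n) (T 0) μ μ) {t : ℝ} (ht : 0 ≤ t)
    (htail : μ {ω | t < T 0 ω} ≠ 0) {K : ℕ} (hK : 0 < K) :
    (μ {ω | countingProcess T t ω < K}).toReal ≤ K * (μ {ω | t / K < T 0 ω}).toReal := by
  rw [← ENNReal.toReal_natCast, ← ENNReal.toReal_mul]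
  refine ENNReal.toReal_mono (by finiteness) ((measure_mono_ae ?_).trans
    (measure_exists_lt_le_mul hident (t / K) K))
  filter_upwards [ae_countingProcess_lt_iff hmeas hnonneg hindep hident ht htail K]
    with ω hiff hlt
  have hsum : ∑ _k ∈ range K, t / K < ∑ k ∈ range K, T k ω := by
    rw [sum_const, card_range, nsmul_eq_mul, mul_div_cancel₀ t (by positivity)]
    exact hiff.1 hlt
  obtain ⟨i, hi, hti⟩ := exists_lt_of_sum_lt hsum
  exact ⟨i, mem_range.1 hi, hti⟩

end CountingProcess

theorem counting_process_tail_bounds_general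
    {Ω : Type*} [MeasurableSpace Ω] (μ : Measure Ω) [IsProbabilityMeasure μ]
    (T : ℕ → Ω → ℝ)
    (hTmeas : ∀ n, Measurable (T n))
    (hTpos : ∀ n, ∀ᵐ ω ∂μ, 0 < T n ω)
    (hTindep : iIndepFun T μ)
    (hTident : ∀ n, IdentDistrib (T n) (T 0) μ μ)
    (Spart : ℕ → Ω → ℝ)
    (hSpart : ∀ n ω, Spart n ω = ∑ k ∈ Finset.range n, T k ω)
    (N : ℝ → Ω → ℕ)
    (hN : ∀ t ω, N t ω = sSup {n : ℕ | Spart n ω ≤ t})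
    -- Tail assumption (Assumption 2.1)
    (β c₁ c₂ t₀ : ℝ)
    (hc₁ : 0 < c₁) (hc₂ : 0 < c₂) (ht₀ : 0 < t₀)
    (htail : ∀ t : ℝ, t₀ < t →
      c₁ / t ^ β ≤ (μ {ω | t < T 0 ω}).toReal ∧ (μ {ω | t < T 0 ω}).toReal ≤ c₂ / t ^ β) :
    ∃ C₀ : ℝ, 0 < C₀ ∧ ∀ K : ℕ, 1 ≤ K → ∀ t : ℝ,
      max t₀ ((2 * c₂) ^ (1 / β)) * (K : ℝ) < t →
      c₁ * (K : ℝ) / t ^ β - C₀ * (K : ℝ) ^ 2 / t ^ (2 * β)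
          ≤ (μ {ω | N t ω < K}).toReal ∧
      (μ {ω | N t ω < K}).toReal
          ≤ c₂ * (K : ℝ) ^ ((1 : ℝ) + β) / t ^ β + C₀ * (K : ℝ) ^ ((1 : ℝ) + 2 * β) / t ^ (2 * β) := by
  obtain rfl : Spart = fun n ω => ∑ k ∈ range n, T k ω := funext₂ hSpart
  obtain rfl : N = countingProcess T := funext₂ hN
  have hTnonneg n : ∀ᵐ ω ∂μ, 0 ≤ T n ω := (hTpos n).mono fun _ h => h.le
  refine ⟨c₂ ^ 2 / 2, by positivity, fun K hK t ht => ?_⟩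
  have hK0 : (0 : ℝ) < K := by exact_mod_cast hK
  have htK : t₀ < t / K := by
    rw [lt_div_iff₀ hK0]
    exact (mul_le_mul_of_nonneg_right (le_max_left _ _) hK0.le).trans_lt ht
  have ht0 : 0 < t := (div_pos_iff_of_pos_right hK0).1 (ht₀.trans htK)
  have htt₀ : t₀ < t := htK.trans_le (div_le_self ht0.le (by exact_mod_cast hK))
  obtain ⟨hp_lb, hp_ub⟩ := htail t htt₀
  have hp : μ {ω | t < T 0 ω} ≠ 0 := fun h => by
    rw [h, ENNReal.toReal_zero] at hp_lb
    exact hp_lb.not_gt (by positivity)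
  constructor
  · rw [mul_comm 2 β, Real.rpow_mul ht0.le, Real.rpow_two]
    exact (mul_div_sub_le_one_sub_one_sub_pow ENNReal.toReal_nonneg measureReal_le_one hp_lb
      hp_ub K).trans (one_sub_one_sub_pow_le_measure_countingProcess_lt hTmeas hTnonneg hTindep
      hTident ht0.le hp K)
  · have hupper := measure_countingProcess_lt_le_mul hTmeas hTnonneg hTindep hTident ht0.le hp hK
    have hq := (htail (t / K) htK).2
    rw [Real.div_rpow ht0.le hK0.le, div_div_eq_mul_div] at hq
    calc (μ {ω | countingProcess T t ω < K}).toReal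
        ≤ K * (c₂ * K ^ β / t ^ β) := hupper.trans (by gcongr)
      _ = c₂ * (K : ℝ) ^ ((1 : ℝ) + β) / t ^ β := by
        rw [Real.rpow_add hK0, Real.rpow_one]; ring
      _ ≤ _ := le_add_of_nonneg_right (by positivity)

/-- Lemma 3.1: under the power-law tail assumption of index `β > 0`,
there is a uniform constant `C₀ > 0` (depending only on `β, c₁, c₂`) so that for every
integer `K ≥ 1` and every `t > max{t₀, (2c₂)^{1/β}} · K`,
`c₁ K / t^β − C₀ K² / t^{2β} ≤ P{N(t) < K} ≤ c₂ K^{1+β} / t^β + C₀ K^{1+2β} / t^{2β}`. -/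
theorem counting_process_tail_bounds
    {Ω : Type*} [MeasurableSpace Ω] (μ : Measure Ω) [IsProbabilityMeasure μ]
    (T : ℕ → Ω → ℝ)
    (hTmeas : ∀ n, Measurable (T n))
    (hTpos : ∀ n, ∀ᵐ ω ∂μ, 0 < T n ω)
    (hTindep : iIndepFun T μ)
    (hTident : ∀ n, IdentDistrib (T n) (T 0) μ μ)
    (Spart : ℕ → Ω → ℝ)
    (hSpart : ∀ n ω, Spart n ω = ∑ k ∈ Finset.range n, T k ω)
    (N : ℝ → Ω → ℕ)
    (hN : ∀ t ω, N t ω = sSup {n : ℕ | Spart n ω ≤ t})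
    -- Tail assumption (Assumption 2.1)
    (β c₁ c₂ t₀ : ℝ)
    (hβ : 0 < β) (hc₁ : 0 < c₁) (hc₂ : 0 < c₂) (ht₀ : 0 < t₀)
    (htail : ∀ t : ℝ, t₀ < t →
      c₁ / t ^ β ≤ (μ {ω | t < T 0 ω}).toReal ∧ (μ {ω | t < T 0 ω}).toReal ≤ c₂ / t ^ β) :
    ∃ C₀ : ℝ, 0 < C₀ ∧ ∀ K : ℕ, 1 ≤ K → ∀ t : ℝ,
      max t₀ ((2 * c₂) ^ (1 / β)) * (K : ℝ) < t →
      c₁ * (K : ℝ) / t ^ β - C₀ * (K : ℝ) ^ 2 / t ^ (2 * β)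
          ≤ (μ {ω | N t ω < K}).toReal ∧
      (μ {ω | N t ω < K}).toReal
          ≤ c₂ * (K : ℝ) ^ ((1 : ℝ) + β) / t ^ β + C₀ * (K : ℝ) ^ ((1 : ℝ) + 2 * β) / t ^ (2 * β) :=
  counting_process_tail_bounds_general μ T hTmeas hTpos hTindep hTident Spart hSpart N hN β c₁ c₂ t₀
    hc₁ hc₂ ht₀ htail
end

section
/- (Spectral bound on the distance from equilibrium) Suppose the N×N transition matrix Q is diagonalizable over ℂ as L Q L^{-1} = D = diag(λ_1, …, λ_N), with λ_1 = 1, |λ_k| ≤ |λ_2| < 1 for all k ≥ 2, the first row of L equal to π and the first column of L^{-1} all ones. Then there is a constant C_N depending only on L (one may take C_N = max_{i,j} Σ_{k=2}^N |ℓ̃_{ik}| |ℓ_{kj}|) such that for every state i and all t ≥ 0: sup_j |p_{i,j}(t) − π_j| ≤ C_N · E(|λ_2|^{N(t)}). -/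
open MeasureTheory ProbabilityTheory Filter Finset

/-! Diagonalising `Q` gives `(Q ^ m) i j = ∑ k, ℓ̃ i k * λ k ^ m * ℓ k j`, and the `k = 0` term is
`π j`; hence `|(Q ^ m) i j - π j| ≤ C * |λ₂| ^ m`. Since `p i j t - π j` is the expectation of
`(Q ^ N(t)) i j - π j`, averaging this bound over the law of `N(t)` gives the claim. -/

namespace Matrix

variable {ι : Type*} [Fintype ι] [DecidableEq ι]

section Semiring

variable {R : Type*} [Semiring R] {A L Linv : Matrix ι ι R} {lam : ι → R}

theorem pow_eq_of_conj_eq_diagonal (hinv : Linv * L = 1) (hdiag : L * A * Linv = diagonal lam)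
    (m : ℕ) : A ^ m = Linv * diagonal (lam ^ m) * L := by
  have hsemi : SemiconjBy Linv (diagonal lam) A := by
    rw [SemiconjBy, ← hdiag]
    simp only [← Matrix.mul_assoc, hinv, Matrix.one_mul]
  calc A ^ m = A ^ m * Linv * L := by rw [Matrix.mul_assoc, hinv, Matrix.mul_one]
    _ = Linv * diagonal (lam ^ m) * L := by rw [← (hsemi.pow_right m).eq, diagonal_pow]

theorem pow_apply_eq_sum_of_conj_eq_diagonal (hinv : Linv * L = 1)
    (hdiag : L * A * Linv = diagonal lam) (m : ℕ) (i j : ι) :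
    (A ^ m) i j = ∑ k, Linv i k * lam k ^ m * L k j := by
  rw [pow_eq_of_conj_eq_diagonal hinv hdiag, mul_apply]
  simp only [mul_diagonal, Pi.pow_apply]

end Semiring

theorem norm_pow_apply_sub_le {𝕜 : Type*} [NormedField 𝕜] {A L Linv : Matrix ι ι 𝕜}
    {lam : ι → 𝕜} (hinv : Linv * L = 1) (hdiag : L * A * Linv = diagonal lam) {k₀ : ι}
    {r : ℝ} (hr : ∀ k ≠ k₀, ‖lam k‖ ≤ r) (m : ℕ) (i j : ι) :
    ‖(A ^ m) i j - Linv i k₀ * lam k₀ ^ m * L k₀ j‖ ≤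
      (∑ k ∈ univ.erase k₀, ‖Linv i k‖ * ‖L k j‖) * r ^ m := by
  rw [pow_apply_eq_sum_of_conj_eq_diagonal hinv hdiag, ← sum_erase_add _ _ (mem_univ k₀),
    add_sub_cancel_right, sum_mul]
  refine (norm_sum_le _ _).trans (sum_le_sum fun k hk => ?_)
  rw [norm_mul, norm_mul, norm_pow, mul_right_comm]
  gcongr
  exact hr k (ne_of_mem_erase hk)

end Matrix

theorem Nat.sSup_eq_succ_iff {s : Set ℕ} {m : ℕ} : sSup s = m + 1 ↔ IsGreatest s (m + 1) := by
  refine ⟨fun h => ?_, IsGreatest.csSup_eq⟩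
  have hbdd : BddAbove s := by
    by_contra hs
    rw [Nat.sSup_of_not_bddAbove hs] at h
    omega
  have hne : s.Nonempty := by
    rw [Set.nonempty_iff_ne_empty]
    rintro rfl
    simp at h
  exact h ▸ ⟨Nat.sSup_mem hne hbdd, fun k hk => le_csSup hbdd hk⟩

section Measure

variable {Ω : Type*} [MeasurableSpace Ω] {μ : Measure Ω} {X : Ω → ℕ}

theorem measurable_sSup_nat {s : Ω → Set ℕ}
    (hs : ∀ m, Measurable fun ω => m ∈ s ω) : Measurable fun ω => sSup (s ω) := by
  have hsucc : ∀ m, Measurable fun ω => sSup (s ω) = m + 1 := by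
    intro m
    simp only [Nat.sSup_eq_succ_iff]
    exact (hs _).and (.forall fun k => .imp (hs k) measurable_const)
  refine measurable_to_countable' fun y => ?_
  cases y with
  | succ m => exact (hsucc m).setOf
  | zero =>
    have hzero : ∀ ω, sSup (s ω) = 0 ↔ ¬∃ m, sSup (s ω) = m + 1 := by
      simp [Nat.exists_eq_add_one]
    simp only [Set.preimage, Set.mem_singleton_iff, hzero]
    exact (Measurable.exists hsucc).not.setOf

theorem measurable_sSup_setOf_le {S : ℕ → Ω → ℝ} (hS : ∀ m, Measurable (S m)) (t : ℝ) :
    Measurable fun ω => sSup {m | S m ω ≤ t} :=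
  measurable_sSup_nat fun m => (measurableSet_le (hS m) measurable_const).mem

theorem integral_comp_eq_tsum_measureReal {E : Type*} [NormedAddCommGroup E] [NormedSpace ℝ E]
    [CompleteSpace E] (hX : Measurable X) {a : ℕ → E} (ha : Integrable (fun ω => a (X ω)) μ) :
    ∫ ω, a (X ω) ∂μ = ∑' m, μ.real {ω | X ω = m} • a m := by
  rw [← integral_map hX.aemeasurable .of_discrete,
    integral_countable ((integrable_map_measure .of_discrete hX.aemeasurable).2 ha)]
  simp only [map_measureReal_apply hX (measurableSet_singleton _), Set.preimage,
    Set.mem_singleton_iff]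

theorem integrable_comp_nat_of_norm_le [IsFiniteMeasure μ] {E : Type*} [NormedAddCommGroup E]
    (hX : Measurable X) {a : ℕ → E} {B : ℝ} (hB : ∀ m, ‖a m‖ ≤ B) :
    Integrable (fun ω => a (X ω)) μ :=
  .of_bound (StronglyMeasurable.of_discrete.comp_measurable hX).aestronglyMeasurable B
    (ae_of_all _ fun ω => hB (X ω))

theorem abs_tsum_mul_measureReal_sub_le [IsProbabilityMeasure μ] (hX : Measurable X)
    {a g : ℕ → ℝ} {c B : ℝ} (hag : ∀ m, |a m - c| ≤ g m) (hgB : ∀ m, g m ≤ B) :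
    |∑' m, a m * μ.real {ω | X ω = m} - c| ≤ ∫ ω, g (X ω) ∂μ := by
  have hg_int : Integrable (fun ω => g (X ω)) μ :=
    integrable_comp_nat_of_norm_le hX fun m => by
      rw [Real.norm_eq_abs, abs_of_nonneg ((abs_nonneg _).trans (hag m))]
      exact hgB m
  have ha_int : Integrable (fun ω => a (X ω)) μ :=
    integrable_comp_nat_of_norm_le hX (B := |c| + B) fun m => by
      rw [Real.norm_eq_abs]
      linarith [abs_sub_abs_le_abs_sub (a m) c, hag m, hgB m]
  have hsum : ∑' m, a m * μ.real {ω | X ω = m} = ∫ ω, a (X ω) ∂μ := by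
    simp only [integral_comp_eq_tsum_measureReal hX ha_int, smul_eq_mul, mul_comm]
  calc |∑' m, a m * μ.real {ω | X ω = m} - c| = ‖∫ ω, (a (X ω) - c) ∂μ‖ := by
        rw [hsum, integral_sub ha_int (integrable_const c), integral_const, probReal_univ,
          one_smul, Real.norm_eq_abs]
    _ ≤ ∫ ω, g (X ω) ∂μ :=
        norm_integral_le_of_norm_le hg_int (ae_of_all _ fun ω => hag (X ω))

end Measure

theorem spectral_bound_distance_from_equilibrium_general
    (n : ℕ) [NeZero n]
    (Q : Matrix (Fin n) (Fin n) ℝ)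
    (π : Fin n → ℝ)
    (L Linv : Matrix (Fin n) (Fin n) ℂ)
    (hLL' : Linv * L = 1)
    (lam : Fin n → ℂ)
    (hdiag : L * Q.map (fun x => (x : ℂ)) * Linv = Matrix.diagonal lam)
    (hlam1 : lam 0 = 1)
    (hlamle : ∀ k : Fin n, k ≠ 0 → ‖lam k‖ ≤ ‖lam 1‖)
    (hlam2 : ‖lam 1‖ < 1)
    (hLrow : ∀ j, L 0 j = (π j : ℂ))
    (hLinvcol : ∀ i, Linv i 0 = 1)
    {Ω : Type*} [MeasurableSpace Ω] (μ : Measure Ω) [IsProbabilityMeasure μ]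
    (T : ℕ → Ω → ℝ)
    (hTmeas : ∀ m, Measurable (T m))
    (Spart : ℕ → Ω → ℝ)
    (hSpart : ∀ m ω, Spart m ω = ∑ k ∈ Finset.range m, T k ω)
    (N : ℝ → Ω → ℕ)
    (hN : ∀ t ω, N t ω = sSup {m : ℕ | Spart m ω ≤ t})
    (p : Fin n → Fin n → ℝ → ℝ)
    (hp : ∀ i j t, p i j t = ∑' m : ℕ, (Q ^ m) i j * (μ {ω | N t ω = m}).toReal)
    (C : ℝ)
    (hC : C = ⨆ i : Fin n, ⨆ j : Fin n,
      ∑ k ∈ Finset.univ.erase (0 : Fin n), ‖Linv i k‖ * ‖L k j‖) :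
    ∀ (i : Fin n) (t : ℝ), 0 ≤ t → ∀ j : Fin n,
      |p i j t - π j| ≤ C * ∫ ω, ‖lam 1‖ ^ (N t ω) ∂μ := by
  intro i t _ j
  have hNmeas : Measurable (N t) := by
    rw [funext (hN t)]
    refine measurable_sSup_setOf_le (fun m => ?_) t
    rw [funext (hSpart m)]
    exact Finset.measurable_sum _ fun k _ => hTmeas k
  have hCij : ∑ k ∈ univ.erase 0, ‖Linv i k‖ * ‖L k j‖ ≤ C :=
    hC ▸ Finite.le_ciSup_of_le i (Finite.le_ciSup_of_le j le_rfl)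
  have hC0 : 0 ≤ C := (sum_nonneg fun _ _ => by positivity).trans hCij
  have hdev : ∀ m, |(Q ^ m) i j - π j| ≤ C * ‖lam 1‖ ^ m := by
    intro m
    have h :=
      Matrix.norm_pow_apply_sub_le (A := Q.map Complex.ofRealHom) hLL' hdiag hlamle m i j
    rw [← Q.map_pow Complex.ofRealHom, hLinvcol, hlam1, hLrow, one_pow, one_mul, one_mul,
      Matrix.map_apply, Complex.ofRealHom_eq_coe, ← Complex.ofReal_sub, Complex.norm_real,
      Real.norm_eq_abs] at h
    exact h.trans (mul_le_mul_of_nonneg_right hCij (by positivity))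
  have hdev_le_C : ∀ m, C * ‖lam 1‖ ^ m ≤ C := fun m =>
    mul_le_of_le_one_right hC0 (pow_le_one₀ (norm_nonneg _) hlam2.le)
  simpa only [hp, measureReal_def, integral_const_mul] using
    abs_tsum_mul_measureReal_sub_le (μ := μ) hNmeas hdev hdev_le_C

/-- spectral bound on the distance from equilibrium: if `Q` is
diagonalizable over `ℂ` with `λ₁ = 1` and `|λ_k| ≤ |λ₂| < 1` for `k ≥ 2`, then with
`C_N = max_{i,j} ∑_{k=2}^N |ℓ̃_{ik}| |ℓ_{kj}|` one has, for every state `i` and `t ≥ 0`,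
`sup_j |p_{i,j}(t) − π_j| ≤ C_N · E(|λ₂|^{N(t)})`. -/
theorem spectral_bound_distance_from_equilibrium
    (n : ℕ) [NeZero n] (hn : 2 ≤ n)
    (Q : Matrix (Fin n) (Fin n) ℝ)
    (hQnonneg : ∀ i j, 0 ≤ Q i j)
    (hQrow : ∀ i, ∑ j, Q i j = 1)
    (π : Fin n → ℝ)
    (hconv : ∀ i j, Tendsto (fun m : ℕ => (Q ^ m) i j) atTop (nhds (π j)))
    (L Linv : Matrix (Fin n) (Fin n) ℂ)
    (hLL : L * Linv = 1) (hLL' : Linv * L = 1)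
    (lam : Fin n → ℂ)
    (hdiag : L * Q.map (fun x => (x : ℂ)) * Linv = Matrix.diagonal lam)
    (hlam1 : lam 0 = 1)
    (hlamle : ∀ k : Fin n, k ≠ 0 → ‖lam k‖ ≤ ‖lam 1‖)
    (hlam2 : ‖lam 1‖ < 1)
    (hLrow : ∀ j, L 0 j = (π j : ℂ))
    (hLinvcol : ∀ i, Linv i 0 = 1)
    {Ω : Type*} [MeasurableSpace Ω] (μ : Measure Ω) [IsProbabilityMeasure μ]
    (T : ℕ → Ω → ℝ)
    (hTmeas : ∀ m, Measurable (T m))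
    (hTpos : ∀ m, ∀ᵐ ω ∂μ, 0 < T m ω)
    (hTindep : iIndepFun T μ)
    (hTident : ∀ m, IdentDistrib (T m) (T 0) μ μ)
    (Spart : ℕ → Ω → ℝ)
    (hSpart : ∀ m ω, Spart m ω = ∑ k ∈ Finset.range m, T k ω)
    (N : ℝ → Ω → ℕ)
    (hN : ∀ t ω, N t ω = sSup {m : ℕ | Spart m ω ≤ t})
    (p : Fin n → Fin n → ℝ → ℝ)
    (hp : ∀ i j t, p i j t = ∑' m : ℕ, (Q ^ m) i j * (μ {ω | N t ω = m}).toReal)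
    (C : ℝ)
    (hC : C = ⨆ i : Fin n, ⨆ j : Fin n,
      ∑ k ∈ Finset.univ.erase (0 : Fin n), ‖Linv i k‖ * ‖L k j‖) :
    ∀ (i : Fin n) (t : ℝ), 0 ≤ t → ∀ j : Fin n,
      |p i j t - π j| ≤ C * ∫ ω, ‖lam 1‖ ^ (N t ω) ∂μ :=
  spectral_bound_distance_from_equilibrium_general n Q π L Linv hLL' lam hdiag hlam1 hlamle hlam2
    hLrow hLinvcol μ T hTmeas Spart hSpart N hN p hp C hC
end
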